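/- For all n ≥ 0 and r ≥ 1: x^n = ∑_{l=0}^{n} [ C(n,l) ∑_{m=0}^{min(r,l)} C(r,m)/(1-λ)^m · m! S(l,m) ] H_{n-l}^{(r)}(x|λ), where S(l,m) denotes the Stirling numbers of the second kind. -/

import Mathlib

/-!
Multiplying the generating function of `H⁽ʳ⁾(·|λ)` by `(eᵗ - λ)ʳ` gives `(1 - λ)ʳ eˣᵗ`.
Writing `eᵗ - λ = (eᵗ - 1) + (1 - λ)`, the binomial theorem and
`(eᵗ - 1)ᵐ = ∑ₗ m! S(l,m) tˡ / l!` make `(eᵗ - λ)ʳ` an explicit exponential generating function,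
and comparing the coefficients of `tⁿ / n!` on both sides is the identity.
-/

open Finset PowerSeries

/-- `m! S(l,m) = ∑_{k₁+⋯+k_m = l, k_j ≥ 1} (l choose k₁,…,k_m)`, i.e. `m!` times the
Stirling number of the second kind. -/
def mFactStirling (l m : ℕ) : ℕ :=
  ∑ k ∈ (Finset.Nat.antidiagonalTuple m l).filter (fun k => ∀ j, 1 ≤ k j),
    Nat.multinomial Finset.univ k

open scoped Nat

lemma mFactStirling_eq_zero_of_lt {l m : ℕ} (h : l < m) : mFactStirling l m = 0 := by
  refine sum_eq_zero fun k hk => absurd h (not_lt.2 ?_)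
  rw [mem_filter, Nat.mem_antidiagonalTuple] at hk
  calc m = ∑ _j : Fin m, 1 := by simp
    _ ≤ ∑ j, k j := sum_le_sum fun j _ => hk.2 j
    _ = l := hk.1

lemma sum_choose_mul_pow_mul_mFactStirling {K : Type*} [Field K] {u : K} (hu : u ≠ 0)
    (r l : ℕ) :
    ∑ m ∈ range (r + 1), r.choose m * u ^ (r - m) * mFactStirling l m =
      u ^ r * ∑ m ∈ range (min r l + 1), r.choose m / u ^ m * mFactStirling l m := by
  rw [← sum_subset (range_subset_range.2 (Nat.succ_le_succ (min_le_left r l))), mul_sum]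
  · refine sum_congr rfl fun m hm => ?_
    rw [pow_sub₀ u hu (by have := mem_range.1 hm; omega)]
    field_simp
  · intro m hmr hm
    rw [mem_range] at hmr hm
    rw [mFactStirling_eq_zero_of_lt (by omega), Nat.cast_zero, mul_zero]

theorem PowerSeries.coeff_prod_fin {R : Type*} [CommSemiring R] {m : ℕ} (f : Fin m → R⟦X⟧)
    (l : ℕ) :
    coeff l (∏ j, f j) = ∑ k ∈ Nat.antidiagonalTuple m l, ∏ j, coeff (k j) (f j) := by
  rw [coeff_prod]
  refine sum_nbij' (⇑) Finsupp.equivFunOnFinite.symm ?_ ?_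
    (fun d _ => Finsupp.equivFunOnFinite.symm_apply_apply d)
    (fun k _ => Finsupp.equivFunOnFinite.apply_symm_apply k) (fun _ _ => rfl)
  · intro d hd
    simpa [Nat.mem_antidiagonalTuple] using hd
  · intro k hk
    simpa [Nat.mem_antidiagonalTuple] using hk

theorem Nat.prod_inv_factorial_eq_multinomial_div {K α : Type*} [Field K] [CharZero K]
    (s : Finset α) (k : α → ℕ) :
    ∏ i ∈ s, ((k i)! : K)⁻¹ = Nat.multinomial s k / (∑ i ∈ s, k i)! := by
  rw [← Nat.multinomial_spec s k, prod_inv_distrib, Nat.cast_mul, Nat.cast_prod]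
  have : ∏ i ∈ s, ((k i)! : K) ≠ 0 :=
    prod_ne_zero_iff.2 fun i _ => Nat.cast_ne_zero.2 (Nat.factorial_ne_zero _)
  have : (Nat.multinomial s k : K) ≠ 0 := Nat.cast_ne_zero.2 (Nat.multinomial_pos s k).ne'
  field_simp

variable {K : Type*} [Field K] [CharZero K]

lemma PowerSeries.coeff_exp_sub_one (k : ℕ) :
    coeff k (exp K - 1) = if k = 0 then 0 else ((k ! : K))⁻¹ := by
  rcases k with _ | k <;> simp [coeff_exp, coeff_one]

lemma PowerSeries.coeff_exp_sub_one_pow (m l : ℕ) :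
    coeff l ((exp K - 1) ^ m) = (mFactStirling l m : K) / l ! := by
  rw [← Fin.prod_const, coeff_prod_fin, mFactStirling, Nat.cast_sum, sum_div,
    ← sum_filter_of_ne (p := fun k => ∀ j, 1 ≤ k j)]
  · refine sum_congr rfl fun k hk => ?_
    rw [mem_filter, Nat.mem_antidiagonalTuple] at hk
    rw [← hk.1, ← Nat.prod_inv_factorial_eq_multinomial_div]
    exact prod_congr rfl fun j _ => by rw [coeff_exp_sub_one, if_neg (by have := hk.2 j; omega)]
  · intro k _ hne j
    by_contra! hj
    exact hne (prod_eq_zero (mem_univ j) (by rw [coeff_exp_sub_one, if_pos (by omega)]))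

lemma PowerSeries.coeff_exp_sub_C_pow (lam : K) (r l : ℕ) :
    coeff l ((exp K - C lam) ^ r) =
      (∑ m ∈ range (r + 1), r.choose m * (1 - lam) ^ (r - m) * mFactStirling l m) / l ! := by
  have hsplit : exp K - C lam = (exp K - 1) + C (1 - lam) := by rw [map_sub, map_one]; ring
  rw [hsplit, add_pow, map_sum, sum_div]
  refine sum_congr rfl fun m _ => ?_
  rw [← map_pow, ← map_natCast (C (R := K)), coeff_mul_C, coeff_mul_C, coeff_exp_sub_one_pow]
  ring

lemma PowerSeries.coeff_mul_mk_mul_inv_factorial (a b : ℕ → K) (n : ℕ) :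
    coeff n ((mk fun k => a k * (k ! : K)⁻¹) * mk fun k => b k * (k ! : K)⁻¹) =
      (∑ l ∈ range (n + 1), n.choose l * a l * b (n - l)) * (n ! : K)⁻¹ := by
  rw [coeff_mul, Nat.sum_antidiagonal_eq_sum_range_succ_mk, sum_mul]
  refine sum_congr rfl fun l hl => ?_
  have hl : l ≤ n := Nat.lt_succ_iff.1 (mem_range.1 hl)
  simp only [coeff_mk]
  have : (n ! : K) ≠ 0 := Nat.cast_ne_zero.2 (Nat.factorial_ne_zero n)
  rw [Nat.cast_choose K hl]
  field_simp

theorem monomial_in_frobenius_euler_general (lam : ℂ) (hlam : lam ≠ 1)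
    (H : ℕ → ℕ → ℂ → ℂ)
    (hH : ∀ (r : ℕ) (x : ℂ),
      (PowerSeries.mk fun n => H r n x * ((n.factorial : ℂ))⁻¹) *
        (PowerSeries.exp ℂ - PowerSeries.C (R := ℂ) lam) ^ r =
      PowerSeries.C (R := ℂ) ((1 - lam) ^ r) *
        PowerSeries.mk fun n => x ^ n * ((n.factorial : ℂ))⁻¹)
    (n r : ℕ) (x : ℂ) :
    x ^ n = ∑ l ∈ range (n + 1),
      ((n.choose l : ℂ) * ∑ m ∈ range (min r l + 1),
        (r.choose m : ℂ) / (1 - lam) ^ m * (mFactStirling l m : ℂ)) * H r (n - l) x := by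
  have hu : 1 - lam ≠ 0 := sub_ne_zero.2 hlam.symm
  have hpow : (exp ℂ - C lam) ^ r = C ((1 - lam) ^ r) * mk fun l =>
      (∑ m ∈ range (min r l + 1), r.choose m / (1 - lam) ^ m * mFactStirling l m) *
        (l ! : ℂ)⁻¹ := by
    ext l
    rw [coeff_C_mul, coeff_mk, coeff_exp_sub_C_pow, sum_choose_mul_pow_mul_mFactStirling hu,
      div_eq_mul_inv, mul_assoc]
  have hcoeff := congrArg (coeff n) (hH r x)
  rw [mul_comm, hpow, mul_assoc, coeff_C_mul, coeff_mul_mk_mul_inv_factorial, coeff_C_mul,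
    coeff_mk] at hcoeff
  have hn : (n ! : ℂ)⁻¹ ≠ 0 := inv_ne_zero (Nat.cast_ne_zero.2 (Nat.factorial_ne_zero n))
  exact (mul_right_cancel₀ hn (mul_left_cancel₀ (pow_ne_zero r hu) hcoeff)).symm

/-- For `r ≥ 1`:
`xⁿ = ∑_{l=0}^{n} [C(n,l) ∑_{m=0}^{min(r,l)} C(r,m)/(1-λ)ᵐ · m!S(l,m)] H_{n-l}⁽ʳ⁾(x|λ)`. -/
theorem monomial_in_frobenius_euler (lam : ℂ) (hlam : lam ≠ 1)
    (H : ℕ → ℕ → ℂ → ℂ)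
    (hH : ∀ (r : ℕ) (x : ℂ),
      (PowerSeries.mk fun n => H r n x * ((n.factorial : ℂ))⁻¹) *
        (PowerSeries.exp ℂ - PowerSeries.C (R := ℂ) lam) ^ r =
      PowerSeries.C (R := ℂ) ((1 - lam) ^ r) *
        PowerSeries.mk fun n => x ^ n * ((n.factorial : ℂ))⁻¹)
    (n r : ℕ) (hr : 1 ≤ r) (x : ℂ) :
    x ^ n = ∑ l ∈ range (n + 1),
      ((n.choose l : ℂ) * ∑ m ∈ range (min r l + 1),
        (r.choose m : ℂ) / (1 - lam) ^ m * (mFactStirling l m : ℂ)) * H r (n - l) x :=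
  monomial_in_frobenius_euler_general lam hlam H hH n r x
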